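/- arXiv:2410.17107 — 5 statements merged into one kernel-verified Lean document; each statement's English description precedes it below -/
import Mathlib

section
/- Let p be a prime with p ≡ 3 (mod 4). Then the quaternion algebra ℍ[ℚ, −1, −p] over ℚ is a division algebra: every nonzero element of ℍ[ℚ, −1, −p] is a unit. -/
open Quaternion

/-- Let `p` be a prime with `p ≡ 3 (mod 4)`. Then the quaternion algebra
`ℍ[ℚ, −1, −p]` is a division algebra: every nonzero element is a unit. -/
theorem quaternionAlgebra_neg_one_neg_p_isDivision (p : ℕ) (hp : p.Prime)
    (h : p % 4 = 3) :
    ∀ x : ℍ[ℚ, -1, -(p : ℚ)], x ≠ 0 → IsUnit x := by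
  intro x hx
  obtain ⟨w, xi, y, z⟩ := x
  set c : ℚ := w * w + xi * xi + p * (y * y) + p * (z * z) with hc
  have key : (⟨w, xi, y, z⟩ : ℍ[ℚ, -1, -(p : ℚ)]) * star ⟨w, xi, y, z⟩
      = (c : ℍ[ℚ, -1, -(p : ℚ)]) := by
    ext <;> simp [hc] <;> ring
  have key' : star (⟨w, xi, y, z⟩ : ℍ[ℚ, -1, -(p : ℚ)]) * ⟨w, xi, y, z⟩
      = (c : ℍ[ℚ, -1, -(p : ℚ)]) := by
    ext <;> simp [hc] <;> ring
  have hp0 : (0 : ℚ) < p := by exact_mod_cast hp.pos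
  have hsq : ∀ t : ℚ, 0 ≤ t * t := fun t => mul_self_nonneg t
  have hc0 : c ≠ 0 := by
    intro h0
    apply hx
    have hw : w * w = 0 := by
      nlinarith [hsq w, hsq xi, mul_nonneg hp0.le (hsq y), mul_nonneg hp0.le (hsq z)]
    have hxi : xi * xi = 0 := by
      nlinarith [hsq w, hsq xi, mul_nonneg hp0.le (hsq y), mul_nonneg hp0.le (hsq z)]
    have hy : (p : ℚ) * (y * y) = 0 := by
      nlinarith [hsq w, hsq xi, mul_nonneg hp0.le (hsq y), mul_nonneg hp0.le (hsq z)]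
    have hz : (p : ℚ) * (z * z) = 0 := by
      nlinarith [hsq w, hsq xi, mul_nonneg hp0.le (hsq y), mul_nonneg hp0.le (hsq z)]
    have hy' : y = 0 := mul_self_eq_zero.mp ((mul_eq_zero.mp hy).resolve_left hp0.ne')
    have hz' : z = 0 := mul_self_eq_zero.mp ((mul_eq_zero.mp hz).resolve_left hp0.ne')
    ext <;> simp [mul_self_eq_zero.mp hw, mul_self_eq_zero.mp hxi, hy', hz']
  refine ⟨⟨⟨w, xi, y, z⟩,
    star (⟨w, xi, y, z⟩ : ℍ[ℚ, -1, -(p : ℚ)]) * ((c⁻¹ : ℚ) : ℍ[ℚ, -1, -(p : ℚ)]), ?_, ?_⟩, rfl⟩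
  · rw [← mul_assoc, key, ← QuaternionAlgebra.coe_mul, mul_inv_cancel₀ hc0,
      QuaternionAlgebra.coe_one]
  · rw [mul_assoc, QuaternionAlgebra.coe_commutes, ← mul_assoc, key',
      ← QuaternionAlgebra.coe_mul, mul_inv_cancel₀ hc0, QuaternionAlgebra.coe_one]
end

section
/- Let p be a prime with p ≡ 3 (mod 4). Then the quaternion algebra ℍ[ℚₚ, −1, −p] over the field ℚₚ of p-adic numbers is a division algebra: every nonzero element is a unit. (That is, the quaternion ℚ-algebra Q(−1, −p | ℚ) is ramified at p.) -/
/-!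
An element `x` of `ℍ[F,c₁,c₂,c₃]` is invertible, with inverse `N(x)⁻¹ • star x`, as soon as its
reduced norm `N(x) = (x * star x).re` is nonzero; for `ℍ[ℚₚ,-1,-p]` this norm is
`a² + b² + p (c² + d²)`. Since `-1` is not a square mod `p`, `1 + t²` is a `p`-adic unit for
integral `t`, hence `‖a² + b²‖ = max ‖a‖ ‖b‖ ^ 2`: a nonzero sum of two squares has even valuation,
while `p (c² + d²)` has odd valuation, so the two summands cannot cancel.
-/

open Quaternion

namespace QuaternionAlgebra

variable {F : Type*} [Field F] {c₁ c₂ c₃ : F}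

theorem isUnit_of_re_mul_star_ne_zero {x : ℍ[F,c₁,c₂,c₃]} (hx : (x * star x).re ≠ 0) :
    IsUnit x := by
  set n := (x * star x).re with hn
  have hinv : x * (n⁻¹ • star x) = 1 := by
    rw [mul_smul_comm, mul_star_eq_coe, ← hn, smul_coe, inv_mul_cancel₀ hx, coe_one]
  refine ⟨⟨x, n⁻¹ • star x, hinv, ?_⟩, rfl⟩
  rwa [smul_mul_assoc, star_comm_self', ← mul_smul_comm]

theorem re_mul_star {R : Type*} [CommRing R] {c₁ c₃ : R} (x : ℍ[R,c₁,0,c₃]) :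
    (x * star x).re = x.re ^ 2 - c₁ * x.imI ^ 2 - c₃ * (x.imJ ^ 2 - c₁ * x.imK ^ 2) := by
  simp only [re_mul, re_star, imI_star, imJ_star, imK_star]
  ring

end QuaternionAlgebra

variable {p : ℕ} [Fact p.Prime]

theorem PadicInt.isUnit_one_add_sq (hp : ¬IsSquare (-1 : ZMod p)) (t : ℤ_[p]) :
    IsUnit (1 + t ^ 2) := by
  by_contra hu
  have h0 : toZMod (1 + t ^ 2) = 0 := by
    rw [← RingHom.mem_ker, ker_toZMod]
    exact hu
  refine hp ⟨toZMod t, ?_⟩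
  rw [map_add, map_one, map_pow] at h0
  linear_combination -h0

namespace Padic

theorem norm_one_add_sq (hp : ¬IsSquare (-1 : ZMod p)) {t : ℚ_[p]} (ht : ‖t‖ ≤ 1) :
    ‖1 + t ^ 2‖ = 1 :=
  PadicInt.isUnit_iff.mp (PadicInt.isUnit_one_add_sq hp ⟨t, ht⟩)

theorem norm_sq_add_sq (hp : ¬IsSquare (-1 : ZMod p)) (a b : ℚ_[p]) :
    ‖a ^ 2 + b ^ 2‖ = max ‖a‖ ‖b‖ ^ 2 := by
  wlog hba : ‖b‖ ≤ ‖a‖ generalizing a b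
  · rw [add_comm, max_comm]
    exact this b a (le_of_not_ge hba)
  rcases eq_or_ne a 0 with rfl | ha
  · simp_all
  have hsplit : a ^ 2 + b ^ 2 = a ^ 2 * (1 + (b / a) ^ 2) := by
    field_simp
  have hquot : ‖b / a‖ ≤ 1 := by
    rwa [norm_div, div_le_one (norm_pos_iff.mpr ha)]
  rw [hsplit, norm_mul, norm_one_add_sq hp hquot, mul_one, norm_pow, max_eq_left hba]

theorem norm_sq_ne_norm_p_mul_norm_sq {u v : ℚ_[p]} (hv : v ≠ 0) :
    ‖u‖ ^ 2 ≠ ‖(p : ℚ_[p])‖ * ‖v‖ ^ 2 := by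
  have hp : (1 : ℝ) < p := by exact_mod_cast (Fact.out : p.Prime).one_lt
  rcases eq_or_ne u 0 with rfl | hu
  · simpa [eq_comm, (Fact.out : p.Prime).ne_zero] using hv
  rw [norm_p, norm_eq_zpow_neg_valuation hu, norm_eq_zpow_neg_valuation hv, ← zpow_natCast,
    ← zpow_natCast, ← zpow_mul, ← zpow_mul, ← zpow_neg_one, ← zpow_add₀ (by positivity)]
  intro h
  have := zpow_right_injective₀ (by positivity) hp.ne' h
  omega

theorem eq_zero_of_sq_add_sq_add_p_mul_sq_add_sq (hp : ¬IsSquare (-1 : ZMod p))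
    {a b c d : ℚ_[p]} (h : a ^ 2 + b ^ 2 + p * (c ^ 2 + d ^ 2) = 0) :
    a = 0 ∧ b = 0 ∧ c = 0 ∧ d = 0 := by
  have hnorm : max ‖a‖ ‖b‖ ^ 2 = ‖(p : ℚ_[p])‖ * max ‖c‖ ‖d‖ ^ 2 := by
    rw [← norm_sq_add_sq hp, ← norm_sq_add_sq hp, ← norm_mul, eq_neg_of_add_eq_zero_left h,
      norm_neg]
  obtain ⟨u, hu⟩ : ∃ u : ℚ_[p], ‖u‖ = max ‖a‖ ‖b‖ := by
    rcases max_choice ‖a‖ ‖b‖ with h | h <;> exact ⟨_, h.symm⟩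
  obtain ⟨v, hv⟩ : ∃ v : ℚ_[p], ‖v‖ = max ‖c‖ ‖d‖ := by
    rcases max_choice ‖c‖ ‖d‖ with h | h <;> exact ⟨_, h.symm⟩
  have hcd : max ‖c‖ ‖d‖ = 0 := by
    rw [← hv, norm_eq_zero]
    by_contra hv0
    exact norm_sq_ne_norm_p_mul_norm_sq hv0 (hu ▸ hv ▸ hnorm)
  have hab : max ‖a‖ ‖b‖ = 0 := by
    simpa [hcd] using hnorm
  obtain ⟨ha, hb⟩ := max_le_iff.mp hab.le
  obtain ⟨hc, hd⟩ := max_le_iff.mp hcd.le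
  exact ⟨norm_le_zero_iff.mp ha, norm_le_zero_iff.mp hb, norm_le_zero_iff.mp hc,
    norm_le_zero_iff.mp hd⟩

end Padic

/-- Let `p` be a prime with `p ≡ 3 (mod 4)`. Then the quaternion algebra
`ℍ[ℚₚ, −1, −p]` over the `p`-adic numbers is a division algebra: every nonzero
element is a unit. -/
theorem quaternionAlgebra_padic_neg_one_neg_p_isDivision (p : ℕ) [Fact p.Prime]
    (h : p % 4 = 3) :
    ∀ x : ℍ[ℚ_[p], -1, -(p : ℚ_[p])], x ≠ 0 → IsUnit x := by
  have hp : ¬IsSquare (-1 : ZMod p) := fun hsq => ZMod.exists_sq_eq_neg_one_iff.mp hsq h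
  intro x hx
  refine QuaternionAlgebra.isUnit_of_re_mul_star_ne_zero fun hnorm => hx ?_
  rw [QuaternionAlgebra.re_mul_star] at hnorm
  have hform : x.re ^ 2 + x.imI ^ 2 + p * (x.imJ ^ 2 + x.imK ^ 2) = 0 := by
    linear_combination hnorm
  obtain ⟨h₁, h₂, h₃, h₄⟩ := Padic.eq_zero_of_sq_add_sq_add_p_mul_sq_add_sq hp hform
  exact QuaternionAlgebra.ext h₁ h₂ h₃ h₄
end

section
/- Let p be a prime with p ≡ 3 (mod 4) and let ℓ be any prime with ℓ ≠ p. Then the quaternion algebra ℍ[ℚ_ℓ, −1, −p] splits: there exists an isomorphism of ℚ_ℓ-algebras ℍ[ℚ_ℓ, −1, −p] ≅ M₂(ℚ_ℓ). (That is, the quaternion ℚ-algebra Q(−1, −p | ℚ) is unramified at every finite place other than p.) -/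
/-!
If `b = c² - a d²` and `2 ≠ 0`, then `i ↦ !![0, a; 1, 0]`, `j ↦ !![c, -a d; d, -c]` is an injective
algebra map `ℍ[F, a, b] → M₂(F)`, hence an isomorphism by dimension count. So it suffices to write
`-p = c² + d²` in `ℚ_ℓ`. For odd `ℓ ≠ p`, `-p` is an `ℓ`-adic unit, it is a sum of two squares modulo
`ℓ` with a nonzero first term, and Hensel's lemma lifts that square. For `ℓ = 2`, `-p ≡ 1 mod 4`, so
`-p` or `-p - 4` is `≡ 1 mod 8`, hence a `2`-adic square.
-/

open Quaternion Polynomial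

namespace QuaternionAlgebra

variable {R : Type*} [CommRing R]

def matrixBasis (a c d : R) :
    Basis (Matrix (Fin 2) (Fin 2) R) a 0 (c ^ 2 - a * d ^ 2) where
  i := !![0, a; 1, 0]
  j := !![c, -(a * d); d, -c]
  k := !![a * d, -(a * c); c, -(a * d)]
  i_mul_i := by ext i j; fin_cases i <;> fin_cases j <;> simp
  j_mul_j := by ext i j; fin_cases i <;> fin_cases j <;> simp <;> ring
  i_mul_j := by ext i j; fin_cases i <;> fin_cases j <;> simp
  j_mul_i := by ext i j; fin_cases i <;> fin_cases j <;> simp <;> ring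

theorem matrixBasis_liftHom_apply (a c d : R) (q : ℍ[R, a, c ^ 2 - a * d ^ 2]) :
    (matrixBasis a c d).liftHom q =
      !![q.re + c * q.imJ + a * d * q.imK, a * q.imI - a * d * q.imJ - a * c * q.imK;
        q.imI + d * q.imJ + c * q.imK, q.re - c * q.imJ - a * d * q.imK] := by
  ext i j; fin_cases i <;> fin_cases j <;>
    simp [Basis.lift, matrixBasis, Matrix.algebraMap_eq_diagonal] <;> ring

variable {F : Type*} [Field F]

theorem matrixBasis_liftHom_injective {a c d : F} (h2 : (2 : F) ≠ 0) (ha : a ≠ 0)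
    (hb : c ^ 2 - a * d ^ 2 ≠ 0) : Function.Injective (matrixBasis a c d).liftHom := by
  rw [injective_iff_map_eq_zero]
  intro q hq
  rw [matrixBasis_liftHom_apply, ← Matrix.ext_iff] at hq
  have e₀₀ := hq 0 0
  have e₀₁ := hq 0 1
  have e₁₀ := hq 1 0
  have e₁₁ := hq 1 1
  simp only [Matrix.of_apply, Matrix.cons_val', Matrix.cons_val_zero, Matrix.cons_val_one,
    Matrix.empty_val', Matrix.cons_val_fin_one, Matrix.zero_apply] at e₀₀ e₀₁ e₁₀ e₁₁
  have hre : q.re = 0 := by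
    have : 2 * q.re = 0 := by linear_combination e₀₀ + e₁₁
    simpa [h2] using this
  have hI : q.imI = 0 := by
    have : a * (2 * q.imI) = 0 := by linear_combination e₀₁ + a * e₁₀
    simpa [ha, h2] using this
  have hJ : q.imJ = 0 := by
    have : (c ^ 2 - a * d ^ 2) * q.imJ = 0 := by
      linear_combination c * e₀₀ - a * d * e₁₀ - c * hre + a * d * hI
    simpa [hb] using this
  have hK : q.imK = 0 := by
    have : (c ^ 2 - a * d ^ 2) * q.imK = 0 := by
      linear_combination c * e₁₀ - d * e₀₀ - c * hI + d * hre
    simpa [hb] using this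
  ext <;> simp [hre, hI, hJ, hK]

theorem nonempty_algEquiv_matrix_of_eq_sq_sub_mul_sq {a b c d : F} (h2 : (2 : F) ≠ 0)
    (ha : a ≠ 0) (hb : b ≠ 0) (hbcd : b = c ^ 2 - a * d ^ 2) :
    Nonempty (ℍ[F, a, b] ≃ₐ[F] Matrix (Fin 2) (Fin 2) F) := by
  subst hbcd
  have hfinrank : Module.finrank F ℍ[F, a, c ^ 2 - a * d ^ 2] =
      Module.finrank F (Matrix (Fin 2) (Fin 2) F) := by
    simp [QuaternionAlgebra.finrank_eq_four, Module.finrank_matrix]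
  have hinj := matrixBasis_liftHom_injective h2 ha hb
  exact ⟨.ofBijective _ ⟨hinj,
    (LinearMap.injective_iff_surjective_of_finrank_eq_finrank
      (f := (matrixBasis a c d).liftHom.toLinearMap) hfinrank).1 hinj⟩⟩

end QuaternionAlgebra

namespace PadicInt

variable {ℓ : ℕ} [Fact ℓ.Prime]

theorem isSquare_of_norm_sq_sub_lt {x₀ a : ℤ_[ℓ]} (h : ‖x₀ ^ 2 - a‖ < ‖2 * x₀‖ ^ 2) :
    IsSquare a := by
  obtain ⟨z, hz, -⟩ := hensels_lemma (F := X ^ 2 - C a) (a := x₀)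
    (by simpa [one_add_one_eq_two] using h)
  exact ⟨z, by simpa [sub_eq_zero, sq, eq_comm] using hz⟩

theorem toZMod_eq_zero_iff_norm_lt_one (x : ℤ_[ℓ]) : toZMod x = 0 ↔ ‖x‖ < 1 := by
  rw [← RingHom.mem_ker, ker_toZMod, IsLocalRing.mem_maximalIdeal, mem_nonunits]

theorem isSquare_intCast_of_modEq_one_eight {n : ℤ} (hn : n ≡ 1 [ZMOD 8]) :
    IsSquare (n : ℤ_[2]) := by
  refine isSquare_of_norm_sq_sub_lt (x₀ := 1) ?_
  have h8 : ‖((1 - n : ℤ) : ℤ_[2])‖ ≤ (2 : ℝ) ^ (-3 : ℤ) :=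
    norm_int_le_pow_iff_dvd.2 hn.dvd
  have h2 : ‖(2 : ℤ_[2])‖ = 2⁻¹ := by simpa using norm_p (p := 2)
  calc ‖1 ^ 2 - (n : ℤ_[2])‖ ≤ (2 : ℝ) ^ (-3 : ℤ) := by simpa using h8
    _ < ‖2 * (1 : ℤ_[2])‖ ^ 2 := by rw [mul_one, h2]; norm_num

theorem isSquare_of_toZMod_eq_sq (hℓ : ℓ ≠ 2) {x : ℤ_[ℓ]} {α : ZMod ℓ} (hα : α ≠ 0)
    (hx : toZMod x = α ^ 2) : IsSquare x := by
  refine isSquare_of_norm_sq_sub_lt (x₀ := (α.val : ℤ_[ℓ])) ?_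
  have hlift : toZMod (α.val : ℤ_[ℓ]) = α := by simp
  have hsub : ‖(α.val : ℤ_[ℓ]) ^ 2 - x‖ < 1 := by
    rw [← toZMod_eq_zero_iff_norm_lt_one, map_sub, map_pow, hlift, hx, sub_self]
  have hunit : ‖2 * (α.val : ℤ_[ℓ])‖ = 1 := by
    refine le_antisymm (norm_le_one _) (not_lt.1 fun hlt => ?_)
    rw [← toZMod_eq_zero_iff_norm_lt_one, map_mul, hlift, map_ofNat] at hlt
    exact mul_ne_zero (Ring.two_ne_zero (by rwa [ZMod.ringChar_zmod_n])) hα hlt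
  rwa [hunit, one_pow]

theorem exists_sq_add_sq_of_modEq_one_four {n : ℤ} (hn : n ≡ 1 [ZMOD 4]) :
    ∃ c d : ℤ_[2], c ^ 2 + d ^ 2 = n := by
  rcases (by simp only [Int.ModEq] at hn ⊢; omega : n ≡ 1 [ZMOD 8] ∨ n - 4 ≡ 1 [ZMOD 8]) with
    h8 | h8
  · obtain ⟨c, hc⟩ := isSquare_intCast_of_modEq_one_eight h8
    exact ⟨c, 0, by rw [hc]; ring⟩
  · obtain ⟨c, hc⟩ := isSquare_intCast_of_modEq_one_eight h8
    exact ⟨c, 2, by push_cast at hc; linear_combination -hc⟩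

theorem exists_sq_add_sq_of_toZMod_ne_zero (hℓ : ℓ ≠ 2) {x : ℤ_[ℓ]} (hx : toZMod x ≠ 0) :
    ∃ c d : ℤ_[ℓ], c ^ 2 + d ^ 2 = x := by
  obtain ⟨α, β, hαβ, hα⟩ : ∃ α β : ZMod ℓ, α ^ 2 + β ^ 2 = toZMod x ∧ α ≠ 0 := by
    obtain ⟨α, β, hαβ⟩ := ZMod.sq_add_sq ℓ (toZMod x)
    by_cases hα : α = 0
    · refine ⟨β, α, by rw [← hαβ, add_comm], fun hβ => hx ?_⟩
      rw [← hαβ, hα, hβ]; ring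
    · exact ⟨α, β, hαβ, hα⟩
  obtain ⟨c, hc⟩ : IsSquare (x - (β.val : ℤ_[ℓ]) ^ 2) :=
    isSquare_of_toZMod_eq_sq hℓ hα (by simp [← hαβ])
  exact ⟨c, β.val, by linear_combination -hc⟩

theorem exists_sq_add_sq_eq_neg_prime {p : ℕ} (hp : p.Prime) (h : p % 4 = 3) (hℓ : ℓ ≠ p) :
    ∃ c d : ℤ_[ℓ], c ^ 2 + d ^ 2 = -p := by
  obtain rfl | hℓ₂ := eq_or_ne ℓ 2
  · simpa using exists_sq_add_sq_of_modEq_one_four (n := -p) (by simp [Int.ModEq]; omega)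
  · refine exists_sq_add_sq_of_toZMod_ne_zero hℓ₂ ?_
    rw [map_neg, map_natCast, neg_ne_zero, ne_eq, ZMod.natCast_eq_zero_iff]
    exact fun hdvd => hℓ ((Nat.prime_dvd_prime_iff_eq Fact.out hp).1 hdvd)

end PadicInt

/-- Let `p` be a prime with `p ≡ 3 (mod 4)` and let `ℓ ≠ p` be any prime. Then the
quaternion algebra `ℍ[ℚ_ℓ, −1, −p]` splits: `ℍ[ℚ_ℓ, −1, −p] ≅ M₂(ℚ_ℓ)` as
`ℚ_ℓ`-algebras. -/
theorem quaternionAlgebra_padic_neg_one_neg_p_splits (p : ℕ) (hp : p.Prime)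
    (h : p % 4 = 3) (ℓ : ℕ) [Fact ℓ.Prime] (hℓ : ℓ ≠ p) :
    Nonempty (ℍ[ℚ_[ℓ], -1, -(p : ℚ_[ℓ])] ≃ₐ[ℚ_[ℓ]] Matrix (Fin 2) (Fin 2) ℚ_[ℓ]) := by
  obtain ⟨c, d, hcd⟩ := PadicInt.exists_sq_add_sq_eq_neg_prime (ℓ := ℓ) hp h hℓ
  have hcd' : (c : ℚ_[ℓ]) ^ 2 + (d : ℚ_[ℓ]) ^ 2 = -p := by
    simpa using congrArg ((↑) : ℤ_[ℓ] → ℚ_[ℓ]) hcd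
  exact QuaternionAlgebra.nonempty_algEquiv_matrix_of_eq_sq_sub_mul_sq (c := c) (d := d)
    two_ne_zero (neg_ne_zero.2 one_ne_zero) (by simpa using hp.ne_zero) (by linear_combination -hcd')
end

section
/- The quaternion algebra ℍ[ℚ₂, −1, −1] over the field ℚ₂ of 2-adic numbers is a division algebra: every nonzero element is a unit. (That is, the Hamilton quaternion ℚ-algebra Q(−1, −1 | ℚ) is ramified at 2.) -/
/-!
Squares in `ℤ/8` are `0, 1, 4`, so a vanishing sum of four squares in `ℤ₂` has all four terms
even; dividing by `2` and repeating, every term is divisible by every power of `2`, hence zero.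
Clearing denominators carries this over to `ℚ₂`. So the reduced norm `a² + b² + c² + d²` of
`ℍ[ℚ₂, -1, -1]` vanishes only at `0`, and a nonzero `x` has inverse `x̄ / N(x)`.
-/

open Quaternion

theorem ZMod.four_mul_eq_zero_of_sum_four_sq_eq_zero :
    ∀ a b c d : ZMod 8, a ^ 2 + b ^ 2 + c ^ 2 + d ^ 2 = 0 → 4 * a = 0 := by
  decide

namespace PadicInt

theorem two_dvd_of_sum_four_sq_eq_zero {a b c d : ℤ_[2]}
    (h : a ^ 2 + b ^ 2 + c ^ 2 + d ^ 2 = 0) : 2 ∣ a := by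
  have h8 : toZModPow 3 (4 * a) = 0 := by
    have hmod8 := congrArg (toZModPow (p := 2) 3) h
    simp only [map_add, map_pow, map_zero] at hmod8
    rw [map_mul, map_ofNat]
    exact ZMod.four_mul_eq_zero_of_sum_four_sq_eq_zero _ _ _ _ hmod8
  rw [← RingHom.mem_ker, ker_toZModPow, Ideal.mem_span_singleton,
    show ((2 : ℕ) : ℤ_[2]) ^ 3 = 4 * 2 by norm_num] at h8
  exact (mul_dvd_mul_iff_left (by norm_num)).mp h8

theorem pow_two_dvd_of_sum_four_sq_eq_zero (n : ℕ) {a b c d : ℤ_[2]}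
    (h : a ^ 2 + b ^ 2 + c ^ 2 + d ^ 2 = 0) : 2 ^ n ∣ a := by
  induction n generalizing a b c d with
  | zero => exact one_dvd a
  | succ n ih =>
    obtain ⟨a', rfl⟩ := two_dvd_of_sum_four_sq_eq_zero h
    obtain ⟨b', rfl⟩ : 2 ∣ b := two_dvd_of_sum_four_sq_eq_zero (b := 2 * a') (c := c) (d := d)
      (by linear_combination h)
    obtain ⟨c', rfl⟩ : 2 ∣ c := two_dvd_of_sum_four_sq_eq_zero (b := 2 * a') (c := 2 * b') (d := d)
      (by linear_combination h)
    obtain ⟨d', rfl⟩ : 2 ∣ d := two_dvd_of_sum_four_sq_eq_zero (b := 2 * a') (c := 2 * b')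
      (d := 2 * c') (by linear_combination h)
    have h' : a' ^ 2 + b' ^ 2 + c' ^ 2 + d' ^ 2 = 0 :=
      (mul_eq_zero.mp (by linear_combination h : (4 : ℤ_[2]) * _ = 0)).resolve_left (by norm_num)
    rw [pow_succ']
    exact mul_dvd_mul_left 2 (ih h')

theorem eq_zero_of_sum_four_sq_eq_zero {a b c d : ℤ_[2]}
    (h : a ^ 2 + b ^ 2 + c ^ 2 + d ^ 2 = 0) : a = 0 := by
  by_contra ha
  have h2 : ¬IsUnit (2 : ℤ_[2]) := by exact_mod_cast (irreducible_p (p := 2)).not_isUnit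
  exact FiniteMultiplicity.not_iff_forall.mpr (pow_two_dvd_of_sum_four_sq_eq_zero · h)
    (FiniteMultiplicity.of_not_isUnit h2 ha)

end PadicInt

theorem IsFractionRing.eq_zero_of_sum_four_sq_eq_zero {R K : Type*} [CommRing R] [CommRing K]
    [Algebra R K] [IsFractionRing R K]
    (hR : ∀ {a b c d : R}, a ^ 2 + b ^ 2 + c ^ 2 + d ^ 2 = 0 → a = 0)
    {a b c d : K} (h : a ^ 2 + b ^ 2 + c ^ 2 + d ^ 2 = 0) : a = 0 := by
  obtain ⟨s, hs⟩ :=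
    IsLocalization.exist_integer_multiples_of_finite (nonZeroDivisors R) ![a, b, c, d]
  obtain ⟨A, hA⟩ := hs 0
  obtain ⟨B, hB⟩ := hs 1
  obtain ⟨C, hC⟩ := hs 2
  obtain ⟨D, hD⟩ := hs 3
  simp only [Matrix.cons_val, Algebra.smul_def] at hA hB hC hD
  have hsum : A ^ 2 + B ^ 2 + C ^ 2 + D ^ 2 = 0 := by
    apply IsFractionRing.injective R K
    simp only [map_add, map_pow, map_zero, hA, hB, hC, hD]
    linear_combination algebraMap R K s ^ 2 * h
  have hsa := congrArg (algebraMap R K) (hR hsum)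
  rw [hA, map_zero] at hsa
  exact (IsLocalization.map_units K s).mul_right_eq_zero.mp hsa

theorem Quaternion.isUnit_of_isUnit_normSq {R : Type*} [CommRing R] {x : ℍ[R]}
    (h : IsUnit (normSq x)) : IsUnit x := by
  refine ⟨⟨x, (↑h.unit⁻¹ : R) • star x, ?_, ?_⟩, rfl⟩
  · rw [mul_smul_comm, self_mul_star, ← coe_smul, smul_eq_mul, h.val_inv_mul, coe_one]
  · rw [smul_mul_assoc, star_mul_self, ← coe_smul, smul_eq_mul, h.val_inv_mul, coe_one]

theorem Quaternion.eq_zero_of_normSq_eq_zero {R : Type*} [CommRing R]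
    (hR : ∀ {a b c d : R}, a ^ 2 + b ^ 2 + c ^ 2 + d ^ 2 = 0 → a = 0) {x : ℍ[R]}
    (hx : normSq x = 0) : x = 0 := by
  rw [normSq_def'] at hx
  ext
  · exact hR hx
  · exact hR (b := x.re) (c := x.imJ) (d := x.imK) (by linear_combination hx)
  · exact hR (b := x.re) (c := x.imI) (d := x.imK) (by linear_combination hx)
  · exact hR (b := x.re) (c := x.imI) (d := x.imJ) (by linear_combination hx)

theorem Padic.eq_zero_of_sum_four_sq_eq_zero {a b c d : ℚ_[2]}
    (h : a ^ 2 + b ^ 2 + c ^ 2 + d ^ 2 = 0) : a = 0 :=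
  IsFractionRing.eq_zero_of_sum_four_sq_eq_zero PadicInt.eq_zero_of_sum_four_sq_eq_zero h

/-- The quaternion algebra `ℍ[ℚ₂, −1, −1]` over the `2`-adic numbers is a division
algebra: every nonzero element is a unit. -/
theorem quaternionAlgebra_padic_two_hamilton_isDivision :
    ∀ x : ℍ[ℚ_[2], -1, -1], x ≠ 0 → IsUnit x := by
  intro x hx
  refine Quaternion.isUnit_of_isUnit_normSq (x := x) (isUnit_iff_ne_zero.mpr ?_)
  exact mt (Quaternion.eq_zero_of_normSq_eq_zero Padic.eq_zero_of_sum_four_sq_eq_zero) hx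
end

section
/- Let ℓ be an odd prime. Then the quaternion algebra ℍ[ℚ_ℓ, −1, −1] splits: there exists an isomorphism of ℚ_ℓ-algebras ℍ[ℚ_ℓ, −1, −1] ≅ M₂(ℚ_ℓ). (That is, the Hamilton quaternion ℚ-algebra Q(−1, −1 | ℚ) is unramified at every odd prime.) -/
/-!
Over a field `K` with `2 ≠ 0` in which `-1 = x² + y²`, the matrices `I = [[x, y], [y, -x]]` and
`J = [[0, 1], [-1, 0]]` satisfy `I² = J² = -1` and `IJ = -JI`, so they define an algebra map
`ℍ[K, -1, -1] → M₂(K)`; it is injective, hence bijective since both sides have dimension 4.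
For an odd prime `ℓ`, `-1 = a² + b²` in `𝔽_ℓ` with `a ≠ 0`, and Hensel's lemma for
`X² - (-1 - B²)`, `B` a lift of `b`, lifts this to `ℤ_ℓ`.
-/

open Quaternion Polynomial

namespace QuaternionAlgebra

variable {K : Type*} [Field K] {x y : K}

def matrixBasisOfSqAddSq (hxy : x ^ 2 + y ^ 2 = -1) :
    Basis (Matrix (Fin 2) (Fin 2) K) (-1 : K) 0 (-1) where
  i := !![x, y; y, -x]
  j := !![0, 1; -1, 0]
  k := !![-y, x; x, y]
  i_mul_i := by
    ext i j; fin_cases i <;> fin_cases j <;> simp <;> grind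
  j_mul_j := by ext i j; fin_cases i <;> fin_cases j <;> simp
  i_mul_j := by ext i j; fin_cases i <;> fin_cases j <;> simp
  j_mul_i := by ext i j; fin_cases i <;> fin_cases j <;> simp

theorem matrixBasisOfSqAddSq_liftHom_apply (hxy : x ^ 2 + y ^ 2 = -1) (u : ℍ[K, -1, -1]) :
    (matrixBasisOfSqAddSq hxy).liftHom u =
      !![u.re + u.imI * x - u.imK * y, u.imI * y + u.imJ + u.imK * x;
        u.imI * y - u.imJ + u.imK * x, u.re - u.imI * x + u.imK * y] := by
  ext i j; fin_cases i <;> fin_cases j <;>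
    simp [matrixBasisOfSqAddSq, Basis.lift, Algebra.algebraMap_eq_smul_one] <;> ring


theorem injective_liftHom_matrixBasisOfSqAddSq (h2 : (2 : K) ≠ 0)
    (hxy : x ^ 2 + y ^ 2 = -1) :
    Function.Injective (matrixBasisOfSqAddSq hxy).liftHom := by
  rw [injective_iff_map_eq_zero]
  intro u hu
  rw [matrixBasisOfSqAddSq_liftHom_apply, ← Matrix.ext_iff] at hu
  have h00 := hu 0 0
  have h01 := hu 0 1
  have h10 := hu 1 0
  have h11 := hu 1 1
  simp only [Matrix.of_apply, Matrix.cons_val', Matrix.cons_val_zero, Matrix.cons_val_one,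
    Matrix.empty_val', Matrix.cons_val_fin_one, Matrix.zero_apply] at h00 h01 h10 h11
  ext <;> refine (mul_eq_zero.mp ?_).resolve_right h2
  · linear_combination h00 + h11
  · linear_combination -x * h00 + x * h11 - y * h01 - y * h10 + 2 * u.imI * hxy
  · linear_combination h01 - h10
  · linear_combination y * h00 - y * h11 - x * h01 - x * h10 + 2 * u.imK * hxy

theorem nonempty_algEquiv_matrix_of_sq_add_sq_eq_neg_one (h2 : (2 : K) ≠ 0)
    (hxy : x ^ 2 + y ^ 2 = -1) :
    Nonempty (ℍ[K, -1, -1] ≃ₐ[K] Matrix (Fin 2) (Fin 2) K) := by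
  have hinj := injective_liftHom_matrixBasisOfSqAddSq h2 hxy
  have hdim : Module.finrank K ℍ[K, -1, -1] = Module.finrank K (Matrix (Fin 2) (Fin 2) K) := by
    simp [QuaternionAlgebra.finrank_eq_four, Module.finrank_matrix]
  exact ⟨AlgEquiv.ofBijective _
    ⟨hinj, (LinearMap.injective_iff_surjective_of_finrank_eq_finrank
      (f := (matrixBasisOfSqAddSq hxy).liftHom.toLinearMap) hdim).mp hinj⟩⟩

end QuaternionAlgebra

instance PadicInt.henselianLocalRing (p : ℕ) [Fact p.Prime] : HenselianLocalRing ℤ_[p] where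
  is_henselian f hf a₀ h₁ h₂ := HenselianRing.is_henselian f hf a₀ h₁ (h₂.map _)

-- `HenselianLocalRing.TFAE` only quantifies over fields in the universe of `R`.
universe u in
theorem HenselianLocalRing.isSquare_of_isSquare_map {R K : Type u} [CommRing R]
    [HenselianLocalRing R] [Field K] (φ : R →+* K) (hφ : Function.Surjective φ)
    (h2 : (2 : K) ≠ 0) {r : R} (hr : φ r ≠ 0) (hsq : IsSquare (φ r)) : IsSquare r := by
  obtain ⟨c, hc⟩ := hsq
  have hc0 : c ≠ 0 := by rintro rfl; simp_all
  have hensel := ((HenselianLocalRing.TFAE R).out 0 2).mp ‹_›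
  obtain ⟨a, ha, -⟩ := hensel φ hφ (X ^ 2 - C r) (monic_X_pow_sub_C r two_ne_zero) c
    (by simp [hc, sq]) (by simp [one_add_one_eq_two, map_ofNat, h2, hc0])
  exact ⟨a, by simpa [sub_eq_zero, sq, eq_comm] using ha⟩

theorem PadicInt.exists_sq_add_sq {p : ℕ} [Fact p.Prime] (hp : p ≠ 2) {u : ℤ_[p]}
    (hu : toZMod u ≠ 0) : ∃ a b : ℤ_[p], a ^ 2 + b ^ 2 = u := by
  have h2 : (2 : ZMod p) ≠ 0 := Ring.two_ne_zero ((ZMod.ringChar_zmod_n p).substr hp)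
  obtain ⟨a, b, ha, hab⟩ : ∃ a b : ZMod p, a ≠ 0 ∧ a ^ 2 + b ^ 2 = toZMod u := by
    obtain ⟨a, b, hab⟩ := ZMod.sq_add_sq p (toZMod u)
    by_cases ha : a = 0
    · exact ⟨b, a, by rintro rfl; simp_all, by rw [← hab, add_comm]⟩
    · exact ⟨a, b, ha, hab⟩
  obtain ⟨B, rfl⟩ := ZMod.ringHom_surjective PadicInt.toZMod b
  obtain ⟨A, hA⟩ := HenselianLocalRing.isSquare_of_isSquare_map PadicInt.toZMod
    (ZMod.ringHom_surjective _) h2 (r := u - B ^ 2) (by simp [← hab, ha])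
    ⟨a, by simp [← hab, sq]⟩
  exact ⟨A, B, by linear_combination -hA⟩

theorem Padic.exists_sq_add_sq_eq_neg_one {p : ℕ} [Fact p.Prime] (hp : p ≠ 2) :
    ∃ x y : ℚ_[p], x ^ 2 + y ^ 2 = -1 := by
  obtain ⟨a, b, hab⟩ := PadicInt.exists_sq_add_sq hp (u := -1) (by simp)
  exact ⟨a, b, by simpa using congrArg ((↑) : ℤ_[p] → ℚ_[p]) hab⟩

/-- Let `ℓ` be an odd prime. Then the quaternion algebra `ℍ[ℚ_ℓ, −1, −1]` splits:
`ℍ[ℚ_ℓ, −1, −1] ≅ M₂(ℚ_ℓ)` as `ℚ_ℓ`-algebras. -/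
theorem quaternionAlgebra_padic_hamilton_splits_odd (ℓ : ℕ) [Fact ℓ.Prime]
    (hℓ : Odd ℓ) :
    Nonempty (ℍ[ℚ_[ℓ], -1, -1] ≃ₐ[ℚ_[ℓ]] Matrix (Fin 2) (Fin 2) ℚ_[ℓ]) := by
  obtain ⟨x, y, hxy⟩ := Padic.exists_sq_add_sq_eq_neg_one (hℓ.ne_two_of_dvd_nat dvd_rfl)
  exact QuaternionAlgebra.nonempty_algEquiv_matrix_of_sq_add_sq_eq_neg_one two_ne_zero hxy
end
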